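/- arXiv:1907.08644 — 4 statements merged into one kernel-verified Lean document; each statement's English description precedes it below -/
import Mathlib

section
/- Let H be a complex Hilbert space, σ(f,g) = Im⟨f,g⟩, and S a bounded nonnegative sesquilinear form on H. Then the condition |σ(f,g)|² ≤ S(f,f)·S(g,g) for all f, g ∈ H holds if and only if the bounded self-adjoint operator A with S(f,g) = ⟨f, Ag⟩ satisfies A ≥ I (i.e., ⟨f, Af⟩ ≥ ⟨f,f⟩ for all f). -/
open scoped InnerProductSpace
open RCLike

/-! Testing `g = I • f` in the symplectic bound gives `‖f‖⁴ ≤ ⟪f, A f⟫²`, since `Im⟪f, I f⟫ = ‖f‖²`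
and the quadratic form of `A` is invariant under multiplication by `I`; positivity of the form then
gives `‖f‖² ≤ ⟪f, A f⟫`. Conversely, if `‖f‖² ≤ ⟪f, A f⟫` for all `f`, the bound follows from the
Cauchy–Schwarz inequality `|Im⟪f, g⟫| ≤ ‖f‖ ‖g‖`. -/

section

variable {𝕜 E : Type*} [RCLike 𝕜] [NormedAddCommGroup E] [InnerProductSpace 𝕜 E]

theorem inner_smul_map_smul {F : Type*} [FunLike F E E] [LinearMapClass F 𝕜 E E] (A : F) (c : 𝕜)
    (f : E) :
    ⟪c • f, A (c • f)⟫_𝕜 = (‖c‖ ^ 2 : 𝕜) * ⟪f, A f⟫_𝕜 := by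
  rw [map_smul, inner_smul_left, inner_smul_right, ← mul_assoc, RCLike.conj_mul]

theorem abs_im_inner_le_norm_mul_norm (f g : E) : |im ⟪f, g⟫_𝕜| ≤ ‖f‖ * ‖g‖ :=
  (abs_im_le_norm _).trans (norm_inner_le_norm f g)

end

section

variable {H : Type*} [NormedAddCommGroup H] [InnerProductSpace ℂ H]

theorem im_inner_smul_I_right (f : H) : (⟪f, Complex.I • f⟫_ℂ).im = ‖f‖ ^ 2 := by
  rw [inner_smul_right, Complex.I_mul_im, ← inner_self_eq_norm_sq (𝕜 := ℂ), RCLike.re_to_complex]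

theorem norm_sq_le_re_inner_map_self_of_abs_im_inner_sq_le (A : H →L[ℂ] H)
    (hpos : ∀ f : H, 0 ≤ (⟪f, A f⟫_ℂ).re)
    (hσ : ∀ f g : H, |(⟪f, g⟫_ℂ).im| ^ 2 ≤ (⟪f, A f⟫_ℂ).re * (⟪g, A g⟫_ℂ).re) (f : H) :
    ‖f‖ ^ 2 ≤ (⟪f, A f⟫_ℂ).re := by
  have hAI : (⟪Complex.I • f, A (Complex.I • f)⟫_ℂ).re = (⟪f, A f⟫_ℂ).re := by
    rw [inner_smul_map_smul, Complex.norm_I, RCLike.ofReal_one, one_pow, one_mul]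
  have hsq := hσ f (Complex.I • f)
  rw [im_inner_smul_I_right, hAI, abs_of_nonneg (by positivity), ← sq] at hsq
  exact (pow_le_pow_iff_left₀ (by positivity) (hpos f) two_ne_zero).mp hsq

theorem abs_im_inner_sq_le_of_norm_sq_le (A : H →L[ℂ] H)
    (hA : ∀ f : H, ‖f‖ ^ 2 ≤ (⟪f, A f⟫_ℂ).re) (f g : H) :
    |(⟪f, g⟫_ℂ).im| ^ 2 ≤ (⟪f, A f⟫_ℂ).re * (⟪g, A g⟫_ℂ).re :=
  calc |(⟪f, g⟫_ℂ).im| ^ 2 ≤ (‖f‖ * ‖g‖) ^ 2 := by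
        gcongr; exact abs_im_inner_le_norm_mul_norm (𝕜 := ℂ) f g
    _ = ‖f‖ ^ 2 * ‖g‖ ^ 2 := mul_pow _ _ _
    _ ≤ (⟪f, A f⟫_ℂ).re * (⟪g, A g⟫_ℂ).re :=
        mul_le_mul (hA f) (hA g) (by positivity) ((sq_nonneg _).trans (hA f))

end

theorem sigma_dominated_iff_A_ge_one_general
    {H : Type*} [NormedAddCommGroup H] [InnerProductSpace ℂ H]
    (A : H →L[ℂ] H)
    (hpos : ∀ f : H, 0 ≤ (⟪f, A f⟫_ℂ).re) :
    (∀ f g : H, |(⟪f, g⟫_ℂ).im| ^ 2 ≤ (⟪f, A f⟫_ℂ).re * (⟪g, A g⟫_ℂ).re) ↔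
      (∀ f : H, (⟪f, f⟫_ℂ).re ≤ (⟪f, A f⟫_ℂ).re) := by
  have hnorm : ∀ f : H, (⟪f, f⟫_ℂ).re = ‖f‖ ^ 2 := inner_self_eq_norm_sq (𝕜 := ℂ)
  simp only [hnorm]
  exact ⟨norm_sq_le_re_inner_map_self_of_abs_im_inner_sq_le A hpos,
    abs_im_inner_sq_le_of_norm_sq_le A⟩

/-- for a bounded self-adjoint operator `A` representing a nonnegative
sesquilinear form `S(f,g) = ⟪f, A g⟫` on a complex Hilbert space, the symplectic
positivity condition `|Im⟪f,g⟫|² ≤ S(f,f) S(g,g)` for all `f, g` holds iff `A ≥ I`,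
i.e. `⟪f, A f⟫ ≥ ⟪f, f⟫` for all `f`. -/
theorem sigma_dominated_iff_A_ge_one
    {H : Type*} [NormedAddCommGroup H] [InnerProductSpace ℂ H] [CompleteSpace H]
    (A : H →L[ℂ] H) (hA : IsSelfAdjoint A)
    (hpos : ∀ f : H, 0 ≤ (⟪f, A f⟫_ℂ).re) :
    (∀ f g : H, |(⟪f, g⟫_ℂ).im| ^ 2 ≤ (⟪f, A f⟫_ℂ).re * (⟪g, A g⟫_ℂ).re) ↔
      (∀ f : H, (⟪f, f⟫_ℂ).re ≤ (⟪f, A f⟫_ℂ).re) :=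
  sigma_dominated_iff_A_ge_one_general A hpos
end

section
/- For 0 < h < 1, the function φ(f) = exp(−‖f‖²/(4h)) on a complex Hilbert space H is σ-positive for σ(f,g) = Im⟨f,g⟩; i.e., for all n, all a_1,…,a_n ∈ ℂ and f_1,…,f_n ∈ H, ∑_{j,k} a_j conj(a_k) e^{-(i/2)Im⟨f_j,f_k⟩} e^{-‖f_j − f_k‖²/(4h)} ≥ 0. -/
open scoped InnerProductSpace ComplexOrder

noncomputable section

open Complex ComplexConjugate Matrix Finset

/-!
Write `z = ⟪f j, f k⟫`. Expanding `‖f j - f k‖²` splits each entry of the matrix as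
`d j * conj (d k) * exp (α z + β conj z)` with `d j = exp (-‖f j‖² / (4h))`,
`α = (1 - h) / (4h)` and `β = (1 + h) / (4h)`; both are nonnegative because `h ≤ 1`.
So the exponent matrix is a nonnegative combination of the Gram matrix and its transpose, hence
positive semidefinite; by the Schur product theorem its entrywise powers, and therefore (passing to
the limit in the closed cone of positive semidefinite matrices) its entrywise exponential, are
positive semidefinite; one more Schur product with the rank-one matrix `d dᴴ` finishes.
-/

namespace Matrix

variable {ι : Type*}

theorem PosSemidef.sum_mul_star_mul_nonneg {R : Type*} [Fintype ι] [CommRing R] [PartialOrder R]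
    [StarRing R] {M : Matrix ι ι R} (hM : M.PosSemidef) (a : ι → R) :
    0 ≤ ∑ j, ∑ k, a j * star (a k) * M j k := by
  simpa [dotProduct, mulVec, Finset.mul_sum, mul_comm, mul_left_comm] using
    hM.dotProduct_mulVec_nonneg (star a)

theorem isClosed_setOf_posSemidef [Fintype ι] :
    IsClosed {A : Matrix ι ι ℂ | A.PosSemidef} := by
  simp only [posSemidef_iff_dotProduct_mulVec, Set.ofPred_and, Set.ofPred_forall]
  refine (isClosed_eq continuous_id.matrix_conjTranspose continuous_id).inter
    (isClosed_iInter fun x => isClosed_le continuous_const ?_)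
  fun_prop

theorem PosSemidef.map_pow [Finite ι] {A : Matrix ι ι ℂ} (hA : A.PosSemidef) (m : ℕ) :
    (A.map (· ^ m)).PosSemidef := by
  induction m with
  | zero =>
    have : A.map (· ^ 0) = vecMulVec 1 (star 1) := by ext; simp [vecMulVec_apply]
    exact this ▸ posSemidef_vecMulVec_self_star 1
  | succ m ih =>
    have : A.map (· ^ (m + 1)) = A.map (· ^ m) ⊙ A := by ext; simp [pow_succ]
    exact this ▸ ih.hadamard hA

theorem PosSemidef.map_cexp [Fintype ι] {A : Matrix ι ι ℂ} (hA : A.PosSemidef) :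
    (A.map cexp).PosSemidef := by
  have partial_sums (N : ℕ) :
      (A.map fun z => ∑ m ∈ range N, z ^ m / m.factorial).PosSemidef := by
    have : A.map (fun z => ∑ m ∈ range N, z ^ m / m.factorial)
        = ∑ m ∈ range N, (m.factorial : ℝ)⁻¹ • A.map (· ^ m) := by
      ext j k; simp [sum_apply, div_eq_inv_mul]
    rw [this]
    exact posSemidef_sum _ fun m _ => (hA.map_pow m).smul (by positivity)
  have tendsto : Filter.Tendsto (fun N => A.map fun z => ∑ m ∈ range N, z ^ m / m.factorial)
      Filter.atTop (nhds (A.map cexp)) := by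
    refine tendsto_pi_nhds.2 fun j => tendsto_pi_nhds.2 fun k => ?_
    simpa [exp_eq_exp_ℂ] using (NormedSpace.expSeries_div_hasSum_exp (A j k)).tendsto_sum_nat
  exact isClosed_setOf_posSemidef.mem_of_tendsto tendsto (.of_forall partial_sums)

end Matrix

section

variable {H : Type*} [NormedAddCommGroup H] [InnerProductSpace ℂ H]

theorem cexp_inner_im_mul_exp_norm_sub_sq {h : ℝ} (hh : h ≠ 0) (x y : H) :
    cexp (-(I / 2) * (⟪x, y⟫_ℂ).im) * (Real.exp (-‖x - y‖ ^ 2 / (4 * h)) : ℂ)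
      = Real.exp (-‖x‖ ^ 2 / (4 * h)) * Real.exp (-‖y‖ ^ 2 / (4 * h)) *
        cexp (((1 - h) / (4 * h) : ℝ) * ⟪x, y⟫_ℂ +
          ((1 + h) / (4 * h) : ℝ) * ⟪y, x⟫_ℂ) := by
  have hnorm : -‖x - y‖ ^ 2 / (4 * h)
      = -‖x‖ ^ 2 / (4 * h) + -‖y‖ ^ 2 / (4 * h) + (⟪x, y⟫_ℂ).re / (2 * h) := by
    rw [show ‖x - y‖ ^ 2 = ‖x‖ ^ 2 - 2 * (⟪x, y⟫_ℂ).re + ‖y‖ ^ 2 by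
      simpa using norm_sub_sq (𝕜 := ℂ) x y]
    field_simp
    ring
  have hexponent (z : ℂ) :
      (((1 - h) / (4 * h) : ℝ) : ℂ) * z + (((1 + h) / (4 * h) : ℝ) : ℂ) * conj z
        = ((z.re / (2 * h) : ℝ) : ℂ) - I / 2 * z.im := by
    apply Complex.ext <;>
      simp only [add_re, add_im, sub_re, sub_im, mul_re, mul_im, ofReal_re, ofReal_im, conj_re,
        conj_im, I_re, I_im, div_ofNat_re, div_ofNat_im] <;>
      field_simp <;> ring
  rw [← inner_conj_symm y x, hexponent, hnorm]
  simp only [ofReal_exp, ← Complex.exp_add]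
  push_cast
  ring_nf

theorem posSemidef_cexp_inner_im_mul_exp_norm_sub_sq {ι : Type*} [Fintype ι] {h : ℝ}
    (hh0 : 0 < h) (hh1 : h ≤ 1) (f : ι → H) :
    (Matrix.of fun j k => cexp (-(I / 2) * (⟪f j, f k⟫_ℂ).im) *
      (Real.exp (-‖f j - f k‖ ^ 2 / (4 * h)) : ℂ)).PosSemidef := by
  set d : ι → ℂ := fun j => Real.exp (-‖f j‖ ^ 2 / (4 * h))
  set B := ((1 - h) / (4 * h) : ℝ) • gram ℂ f + ((1 + h) / (4 * h) : ℝ) • (gram ℂ f)ᵀ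
  have hB : B.PosSemidef :=
    ((posSemidef_gram ℂ f).smul (div_nonneg (sub_nonneg.2 hh1) (by positivity))).add
      ((posSemidef_gram ℂ f).transpose.smul (by positivity))
  have hfactor : (Matrix.of fun j k => cexp (-(I / 2) * (⟪f j, f k⟫_ℂ).im) *
      (Real.exp (-‖f j - f k‖ ^ 2 / (4 * h)) : ℂ)) = vecMulVec d (star d) ⊙ B.map cexp := by
    ext j k
    simp only [of_apply, cexp_inner_im_mul_exp_norm_sub_sq hh0.ne', hadamard_apply,
      vecMulVec_apply, Pi.star_apply, RCLike.star_def, conj_ofReal, map_apply, Matrix.add_apply,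
      Matrix.smul_apply, transpose_apply, gram_apply, real_smul, d, B]
  rw [hfactor]
  exact (posSemidef_vecMulVec_self_star d).hadamard hB.map_cexp

end

/-- for `0 < h < 1`, the function `φ(f) = exp(-‖f‖²/(4h))` on a complex
Hilbert space is `σ`-positive for `σ(f,g) = Im⟪f,g⟫`: all the matrices
`[exp(-(i/2) Im⟪f_j,f_k⟫) φ(f_j - f_k)]` are positive semidefinite. -/
theorem rescaled_fock_generating_function_sigma_positive
    {H : Type*} [NormedAddCommGroup H] [InnerProductSpace ℂ H]
    (h : ℝ) (hh0 : 0 < h) (hh1 : h < 1) :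
    ∀ (n : ℕ) (a : Fin n → ℂ) (f : Fin n → H),
      0 ≤ ∑ j : Fin n, ∑ k : Fin n,
        a j * (starRingEnd ℂ) (a k) *
          Complex.exp (-(Complex.I / 2) * ((⟪f j, f k⟫_ℂ).im : ℂ)) *
          (Real.exp (-(‖f j - f k‖ ^ 2) / (4 * h)) : ℂ) := by
  intro n a f
  simpa only [of_apply, mul_assoc, starRingEnd_apply] using
    (posSemidef_cexp_inner_im_mul_exp_norm_sub_sq hh0 hh1.le f).sum_mul_star_mul_nonneg a
end
end

section
/- With A, Δ as above (spec(A) ⊆ [1+δ, M], Δ = ((A+I)/(A−I))^{1/β}), the function Φ(f,g;z) = (1/2)⟨f,(A+I)Δ^{iz}g⟩ + (1/2)⟨g,(A−I)Δ^{−iz}f⟩ satisfies the KMS boundary conditions: Φ(f,g;t) = F(f,g;t) and Φ(f,g;t+iβ) = F(g,f;−t) for all real t, where F(f,g;t) = (1/2)⟨f, e^{ith}(A+I)g⟩ + (1/2)⟨g, e^{−ith}(A−I)f⟩ with e^{ith} = Δ^{it}. -/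
open scoped InnerProductSpace

noncomputable section

/-- `Δ^{iz}` for `Δ = ((A+I)(A-I)⁻¹)^{1/β}`, defined by the (complex) continuous
functional calculus: `Δ^{iz} = exp(iz·log Δ)` with `log Δ = (1/β) log((A+I)/(A-I))`. -/
def deltaPow {H : Type*} [NormedAddCommGroup H] [InnerProductSpace ℂ H]
    [CompleteSpace H] (β : ℝ) (A : H →L[ℂ] H) (z : ℂ) : H →L[ℂ] H :=
  cfc (fun x : ℂ => Complex.exp (Complex.I * z * Complex.log ((x + 1) / (x - 1)) / β)) A

section aux
variable {H : Type*} [NormedAddCommGroup H] [InnerProductSpace ℂ H] [CompleteSpace H]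
  (A : H →L[ℂ] H)

lemma spec_real (hA : IsSelfAdjoint A) (δ M : ℝ) (hδ : 0 < δ)
    (hspec : spectrum ℝ A ⊆ Set.Icc (1 + δ) M) :
    ∀ x ∈ spectrum ℂ A, ∃ r : ℝ, 1 + δ ≤ r ∧ x = (r : ℂ) := by
  intro x hx
  rw [← hA.spectrumRestricts.algebraMap_image] at hx
  obtain ⟨r, hr, rfl⟩ := hx
  exact ⟨r, (hspec hr).1, rfl⟩

lemma contOn (β : ℝ) (hA : IsSelfAdjoint A) (δ M : ℝ) (hδ : 0 < δ)
    (hspec : spectrum ℝ A ⊆ Set.Icc (1 + δ) M) (z : ℂ) :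
    ContinuousOn (fun x : ℂ => Complex.exp (Complex.I * z * Complex.log ((x + 1) / (x - 1)) / β))
      (spectrum ℂ A) := by
  intro x hx
  obtain ⟨r, hr, rfl⟩ := spec_real A hA δ M hδ hspec x hx
  have hr1 : (1:ℝ) < r := by linarith
  have hne : ((r:ℂ) - 1) ≠ 0 := by
    simp only [ne_eq, sub_eq_zero]
    exact_mod_cast hr1.ne'
  have hw : (((r:ℂ) + 1) / ((r:ℂ) - 1)) = (((r+1)/(r-1) : ℝ) : ℂ) := by push_cast; ring
  have hwre : 0 < ((((r:ℂ)) + 1) / ((r:ℂ) - 1)).re := by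
    rw [hw, Complex.ofReal_re]
    exact div_pos (by linarith) (by linarith)
  have h1 : ContinuousAt (fun x : ℂ => (x + 1) / (x - 1)) (r : ℂ) :=
    ContinuousAt.div (by fun_prop) (by fun_prop) hne
  have h2 : ContinuousAt (fun x : ℂ => Complex.log ((x + 1) / (x - 1))) (r : ℂ) :=
    h1.clog (Complex.mem_slitPlane_iff.mpr (Or.inl hwre))
  exact ((Complex.continuous_exp.continuousAt.comp
    (((continuousAt_const.mul continuousAt_const).mul h2).div_const β)).continuousWithinAt)

lemma cfc_add_one (hA : IsSelfAdjoint A) : cfc (fun x : ℂ => x + 1) A = A + 1 := by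
  have := hA.isStarNormal
  rw [cfc_add (R := ℂ) (a := A) (fun x => x) (fun _ => 1) (by fun_prop) (by fun_prop), cfc_id' ℂ A,
    cfc_const_one ℂ A]

lemma cfc_sub_one (hA : IsSelfAdjoint A) : cfc (fun x : ℂ => x - 1) A = A - 1 := by
  have := hA.isStarNormal
  rw [cfc_sub (R := ℂ) (a := A) (fun x => x) (fun _ => 1) (by fun_prop) (by fun_prop), cfc_id' ℂ A,
    cfc_const_one ℂ A]

lemma shift1 (β : ℝ) (hβ : 0 < β) (hA : IsSelfAdjoint A) (δ M : ℝ) (hδ : 0 < δ)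
    (hspec : spectrum ℝ A ⊆ Set.Icc (1 + δ) M) (z : ℂ) :
    (A + 1) * deltaPow β A (z + Complex.I * β) = (A - 1) * deltaPow β A z := by
  have := hA.isStarNormal
  have hβ' : (β:ℂ) ≠ 0 := by exact_mod_cast hβ.ne'
  rw [deltaPow, deltaPow, ← cfc_add_one A hA, ← cfc_sub_one A hA,
    ← cfc_mul _ _ A (by fun_prop) (contOn A β hA δ M hδ hspec _),
    ← cfc_mul _ _ A (by fun_prop) (contOn A β hA δ M hδ hspec _)]
  refine cfc_congr fun x hx => ?_
  obtain ⟨r, hr, rfl⟩ := spec_real A hA δ M hδ hspec x hx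
  set x : ℂ := (r : ℂ)
  have hne : x - 1 ≠ 0 := by
    simp only [x, ne_eq, sub_eq_zero]
    exact_mod_cast (by linarith : (1:ℝ) < r).ne'
  have hne' : x + 1 ≠ 0 := by
    simp only [x, ne_eq]
    intro h
    have : (r:ℂ) = -1 := by linear_combination h
    have : r = (-1 : ℝ) := by exact_mod_cast this
    linarith
  have hw0 : (x + 1) / (x - 1) ≠ 0 := div_ne_zero hne' hne
  set L : ℂ := Complex.log ((x + 1) / (x - 1))
  have key : Complex.I * (z + Complex.I * β) * L / β = Complex.I * z * L / β + (-L) := by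
    field_simp
    linear_combination (↑β * L) * Complex.I_sq
  rw [key, Complex.exp_add, Complex.exp_neg, Complex.exp_log hw0]
  field_simp

lemma shift2 (β : ℝ) (hβ : 0 < β) (hA : IsSelfAdjoint A) (δ M : ℝ) (hδ : 0 < δ)
    (hspec : spectrum ℝ A ⊆ Set.Icc (1 + δ) M) (z : ℂ) :
    (A - 1) * deltaPow β A (z - Complex.I * β) = (A + 1) * deltaPow β A z := by
  have := hA.isStarNormal
  have hβ' : (β:ℂ) ≠ 0 := by exact_mod_cast hβ.ne'
  rw [deltaPow, deltaPow, ← cfc_add_one A hA, ← cfc_sub_one A hA,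
    ← cfc_mul _ _ A (by fun_prop) (contOn A β hA δ M hδ hspec _),
    ← cfc_mul _ _ A (by fun_prop) (contOn A β hA δ M hδ hspec _)]
  refine cfc_congr fun x hx => ?_
  obtain ⟨r, hr, rfl⟩ := spec_real A hA δ M hδ hspec x hx
  set x : ℂ := (r : ℂ)
  have hne : x - 1 ≠ 0 := by
    simp only [x, ne_eq, sub_eq_zero]
    exact_mod_cast (by linarith : (1:ℝ) < r).ne'
  have hne' : x + 1 ≠ 0 := by
    simp only [x, ne_eq]
    intro h
    have : (r:ℂ) = -1 := by linear_combination h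
    have : r = (-1 : ℝ) := by exact_mod_cast this
    linarith
  have hw0 : (x + 1) / (x - 1) ≠ 0 := div_ne_zero hne' hne
  set L : ℂ := Complex.log ((x + 1) / (x - 1))
  have key : Complex.I * (z - Complex.I * β) * L / β = Complex.I * z * L / β + L := by
    field_simp
    linear_combination (-(↑β * L)) * Complex.I_sq
  rw [key, Complex.exp_add, Complex.exp_log hw0]
  field_simp

end aux

/-- The two-point function `F(f,g;t) = (1/2)⟪f, e^{ith}(A+I)g⟫ + (1/2)⟪g, e^{-ith}(A-I)f⟫`
with `e^{ith} = Δ^{it}`. -/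
def kmsF {H : Type*} [NormedAddCommGroup H] [InnerProductSpace ℂ H] [CompleteSpace H]
    (β : ℝ) (A : H →L[ℂ] H) (f g : H) (t : ℝ) : ℂ :=
  (1 / 2) * ⟪f, ((A + 1) * deltaPow β A (t : ℂ)) g⟫_ℂ +
    (1 / 2) * ⟪g, ((A - 1) * deltaPow β A (-(t : ℂ))) f⟫_ℂ

/-- The analytic extension `Φ(f,g;z) = (1/2)⟪f,(A+I)Δ^{iz}g⟫ + (1/2)⟪g,(A-I)Δ^{-iz}f⟫`. -/
def kmsPhi {H : Type*} [NormedAddCommGroup H] [InnerProductSpace ℂ H] [CompleteSpace H]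
    (β : ℝ) (A : H →L[ℂ] H) (f g : H) (z : ℂ) : ℂ :=
  (1 / 2) * ⟪f, ((A + 1) * deltaPow β A z) g⟫_ℂ +
    (1 / 2) * ⟪g, ((A - 1) * deltaPow β A (-z)) f⟫_ℂ

/-- with `spec(A) ⊆ [1+δ, M]` and `Δ = ((A+I)/(A-I))^{1/β}`, the function
`Φ(f,g;z)` satisfies the KMS boundary conditions: `Φ(f,g;t) = F(f,g;t)` and
`Φ(f,g;t+iβ) = F(g,f;-t)` for all real `t`. -/
theorem kms_boundary_conditions
    {H : Type*} [NormedAddCommGroup H] [InnerProductSpace ℂ H] [CompleteSpace H]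
    (A : H →L[ℂ] H) (hA : IsSelfAdjoint A) (δ M β : ℝ) (hδ : 0 < δ) (hβ : 0 < β)
    (hspec : spectrum ℝ A ⊆ Set.Icc (1 + δ) M) :
    (∀ (f g : H) (t : ℝ), kmsPhi β A f g (t : ℂ) = kmsF β A f g t) ∧
    (∀ (f g : H) (t : ℝ),
      kmsPhi β A f g ((t : ℂ) + Complex.I * (β : ℂ)) = kmsF β A g f (-t)) := by
  refine ⟨fun f g t => rfl, fun f g t => ?_⟩
  unfold kmsPhi kmsF
  have h1 := shift1 A β hβ hA δ M hδ hspec (t : ℂ)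
  have h2 := shift2 A β hβ hA δ M hδ hspec (-(t : ℂ))
  have e2 : -((t:ℂ) + Complex.I * β) = (-(t:ℂ)) - Complex.I * β := by ring
  rw [e2, h1, h2]
  push_cast
  ring

end
end

section
/- For 0 < h ≤ 1 and A a bounded self-adjoint operator with A ≥ I on a complex Hilbert space, the generating function φ(f) = exp(−(1/(4h))⟨f, Af⟩) satisfies the σ-positivity condition with respect to σ(f,g) = Im⟨f,g⟩; i.e., all matrices [e^{−(i/2)Im⟨f_j,f_k⟩} e^{−(1/(4h))⟨f_j−f_k, A(f_j−f_k)⟩}]_{j,k} are positive semidefinite. -/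
/-!
Put `c = 1 / (4h) ≥ 1 / 4`. Since `Im⟪u, v⟫ = (⟪u, v⟫ - ⟪v, u⟫) / (2i)` and `A` is self-adjoint,
the `(j, k)` entry of the matrix factors as `d_j * conj d_k * exp L_jk` with
`d_j = exp (-c ⟪f_j, A f_j⟫)` and `L_jk = ⟪f_j, (cA - 1/4) f_k⟫ + ⟪f_k, (cA + 1/4) f_j⟫`.
Both operators are positive because `A ≥ 1` and `c ≥ 1/4`, so `L` is positive semidefinite.
By the Schur product theorem its entrywise powers, hence its entrywise exponential, are positive
semidefinite, and the rank-one factor `d d*` preserves this.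
-/

open scoped InnerProductSpace ComplexOrder ComplexConjugate Matrix

theorem smul_sub_smul_one_nonneg {R : Type*} [Ring R] [PartialOrder R] [IsOrderedAddMonoid R]
    [Module ℝ R] [PosSMulMono ℝ R] [ZeroLEOneClass R] {a : R} (ha : 1 ≤ a) {c r : ℝ}
    (hc : 0 ≤ c) (hr : r ≤ c) : 0 ≤ c • a - r • 1 := by
  have hsplit : c • a - r • 1 = c • (a - 1) + (c - r) • (1 : R) := by
    rw [smul_sub, sub_smul]; abel
  rw [hsplit]
  exact add_nonneg (smul_nonneg hc (sub_nonneg.mpr ha)) (smul_nonneg (sub_nonneg.mpr hr) zero_le_one)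

namespace Matrix

variable {ι : Type*}

theorem PosSemidef.map_pow_s18 [Finite ι] {M : Matrix ι ι ℂ} (hM : M.PosSemidef) (p : ℕ) :
    (M.map (· ^ p)).PosSemidef := by
  induction p with
  | zero =>
    have hone : M.map (· ^ 0) = vecMulVec 1 (star 1) := by ext; simp [vecMulVec]
    rw [hone]
    exact posSemidef_vecMulVec_self_star 1
  | succ p ih =>
    have hsucc : M.map (· ^ (p + 1)) = M.map (· ^ p) ⊙ M := by ext; simp [pow_succ]
    rw [hsucc]
    exact ih.hadamard hM

theorem PosSemidef.map_exp [Fintype ι] {M : Matrix ι ι ℂ} (hM : M.PosSemidef) :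
    (M.map Complex.exp).PosSemidef := by
  refine posSemidef_iff_dotProduct_mulVec.mpr ⟨hM.isHermitian.map _ Complex.exp_conj, fun x => ?_⟩
  have hsum : HasSum (fun p : ℕ => star x ⬝ᵥ M.map (· ^ p) *ᵥ x / p.factorial)
      (star x ⬝ᵥ M.map Complex.exp *ᵥ x) := by
    simp only [dotProduct, mulVec, Finset.sum_div, Finset.mul_sum]
    refine hasSum_sum fun i _ => hasSum_sum fun j _ => ?_
    have h := ((NormedSpace.expSeries_div_hasSum_exp (M i j)).mul_left (star x i)).mul_right (x j)
    rw [← Complex.exp_eq_exp_ℂ] at h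
    simpa only [map_apply, mul_assoc, mul_div_right_comm] using h.congr_fun fun p => by ring
  exact hsum.nonneg fun p =>
    div_nonneg ((hM.map_pow_s18 p).dotProduct_mulVec_nonneg x) (Nat.cast_nonneg _)

variable {H : Type*} [NormedAddCommGroup H] [InnerProductSpace ℂ H] [CompleteSpace H]

theorem posSemidef_inner_apply_of_nonneg [Finite ι] {T : H →L[ℂ] H} (hT : 0 ≤ T) (v : ι → H) :
    (of fun i j => ⟪v i, T (v j)⟫_ℂ).PosSemidef := by
  obtain ⟨S, rfl⟩ := CStarAlgebra.nonneg_iff_eq_star_mul_self.mp hT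
  have hgram : (of fun i j => ⟪v i, (star S * S) (v j)⟫_ℂ) = gram ℂ (S ∘ v) := by
    ext i j
    simp [ContinuousLinearMap.star_eq_adjoint, ContinuousLinearMap.adjoint_inner_right]
  rw [hgram]
  exact posSemidef_gram ℂ _

end Matrix

def IsSigmaPositive {H : Type*} [AddCommGroup H] (σ : H → H → ℝ) (φ : H → ℂ) : Prop :=
  ∀ (n : ℕ) (f : Fin n → H),
    (Matrix.of fun j k => Complex.exp (-(Complex.I / 2) * σ (f j) (f k)) * φ (f j - f k)).PosSemidef

section

variable {H : Type*} [NormedAddCommGroup H] [InnerProductSpace ℂ H] [CompleteSpace H]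

theorem ContinuousLinearMap.one_le_of_norm_sq_le_re_inner {A : H →L[ℂ] H} (hA : IsSelfAdjoint A)
    (hge : ∀ f : H, ‖f‖ ^ 2 ≤ (⟪f, A f⟫_ℂ).re) : 1 ≤ A := by
  rw [le_def, isPositive_def']
  refine ⟨hA.sub (.one _), fun f => ?_⟩
  rw [reApplyInnerSelf_apply, sub_apply, one_apply_eq_self, inner_sub_left, map_sub,
    inner_self_eq_norm_sq, inner_re_symm]
  exact sub_nonneg.mpr (hge f)

theorem exp_twist_mul_exp_re_inner_sub {A : H →L[ℂ] H} (hA : IsSelfAdjoint A) (c : ℝ) (u v : H) :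
    Complex.exp (-(Complex.I / 2) * (⟪u, v⟫_ℂ).im) * Real.exp (-c * (⟪u - v, A (u - v)⟫_ℂ).re) =
      Real.exp (-c * (⟪u, A u⟫_ℂ).re) * Real.exp (-c * (⟪v, A v⟫_ℂ).re) *
        Complex.exp (⟪u, (c • A - (1 / 4 : ℝ) • 1) v⟫_ℂ + ⟪v, (c • A + (1 / 4 : ℝ) • 1) u⟫_ℂ) := by
  have hAvu : ⟪v, A u⟫_ℂ = conj ⟪u, A v⟫_ℂ := by
    rw [inner_conj_symm]; exact (hA.isSymmetric v u).symm
  have hvu : ⟪v, u⟫_ℂ = conj ⟪u, v⟫_ℂ := (inner_conj_symm _ _).symm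
  simp only [Complex.ofReal_exp, ← Complex.exp_add, map_sub, inner_sub_left, inner_sub_right,
    add_apply, sub_apply, smul_apply, one_apply_eq_self, inner_add_right, ← Complex.coe_smul,
    inner_smul_right]
  rw [hAvu, hvu]
  congr 1
  apply Complex.ext <;> simp [-inner_conj_symm] <;> ring

theorem isSigmaPositive_exp_neg_re_inner {A : H →L[ℂ] H} (hA : IsSelfAdjoint A) (h1 : 1 ≤ A)
    {c : ℝ} (hc : 1 / 4 ≤ c) :
    IsSigmaPositive (fun u v => (⟪u, v⟫_ℂ).im) (fun g => Real.exp (-c * (⟪g, A g⟫_ℂ).re)) := by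
  intro n f
  have hminus : 0 ≤ c • A - (1 / 4 : ℝ) • 1 := smul_sub_smul_one_nonneg h1 (by linarith) hc
  have hplus : 0 ≤ c • A + (1 / 4 : ℝ) • 1 := by
    simpa [sub_eq_add_neg] using
      smul_sub_smul_one_nonneg h1 (by linarith) (by linarith : -(1 / 4 : ℝ) ≤ c)
  let d : Fin n → ℂ := fun j => Real.exp (-c * (⟪f j, A (f j)⟫_ℂ).re)
  let L : Matrix (Fin n) (Fin n) ℂ :=
    (Matrix.of fun j k => ⟪f j, (c • A - (1 / 4 : ℝ) • 1) (f k)⟫_ℂ) +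
      (Matrix.of fun j k => ⟪f j, (c • A + (1 / 4 : ℝ) • 1) (f k)⟫_ℂ)ᵀ
  have hL : L.PosSemidef := (Matrix.posSemidef_inner_apply_of_nonneg hminus f).add
    (Matrix.posSemidef_inner_apply_of_nonneg hplus f).transpose
  have hfactor : (Matrix.of fun j k => Complex.exp (-(Complex.I / 2) * (⟪f j, f k⟫_ℂ).im) *
      (Real.exp (-c * (⟪f j - f k, A (f j - f k)⟫_ℂ).re) : ℂ)) =
      Matrix.vecMulVec d (star d) ⊙ L.map Complex.exp := by
    ext j k
    simp only [Matrix.of_apply, exp_twist_mul_exp_re_inner_sub hA, Matrix.hadamard_apply,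
      Matrix.vecMulVec_apply, Matrix.map_apply, Matrix.add_apply, Matrix.transpose_apply,
      Pi.star_apply, RCLike.star_def, Complex.conj_ofReal, d, L]
  rw [hfactor]
  exact (Matrix.posSemidef_vecMulVec_self_star d).hadamard hL.map_exp

end

/-- for `0 < h ≤ 1` and `A` bounded self-adjoint with `A ≥ I` on a
complex Hilbert space, the generating function `φ(f) = exp(-(1/(4h))⟪f, A f⟫)` is
`σ`-positive for `σ(f,g) = Im⟪f,g⟫`: all the matrices
`[exp(-(i/2) Im⟪f_j,f_k⟫) exp(-(1/(4h))⟪f_j-f_k, A(f_j-f_k)⟫)]` are positive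
semidefinite. -/
theorem rescaled_quasifree_generating_function_sigma_positive
    {H : Type*} [NormedAddCommGroup H] [InnerProductSpace ℂ H] [CompleteSpace H]
    (A : H →L[ℂ] H) (hA : IsSelfAdjoint A)
    (hge : ∀ f : H, ‖f‖ ^ 2 ≤ (⟪f, A f⟫_ℂ).re)
    (h : ℝ) (hh0 : 0 < h) (hh1 : h ≤ 1) :
    ∀ (n : ℕ) (a : Fin n → ℂ) (f : Fin n → H),
      0 ≤ ∑ j : Fin n, ∑ k : Fin n,
        a j * (starRingEnd ℂ) (a k) *
          Complex.exp (-(Complex.I / 2) * ((⟪f j, f k⟫_ℂ).im : ℂ)) *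
          (Real.exp (-(1 / (4 * h)) * (⟪f j - f k, A (f j - f k)⟫_ℂ).re) : ℂ) := by
  intro n a f
  have hc : (1 : ℝ) / 4 ≤ 1 / (4 * h) := one_div_le_one_div_of_le (by positivity) (by linarith)
  have hM := isSigmaPositive_exp_neg_re_inner hA
    (ContinuousLinearMap.one_le_of_norm_sq_le_re_inner hA hge) hc n f
  have hform := hM.dotProduct_mulVec_nonneg (star a)
  simp only [dotProduct, Matrix.mulVec, Finset.mul_sum, Matrix.of_apply, Pi.star_apply,
    star_star] at hform
  convert hform using 3 with j _ k _
  simp only [RCLike.star_def]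
  ring
end
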